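/- arXiv:2212.12921 — 3 statements merged into one kernel-verified Lean document; each statement's English description precedes it below -/
import Mathlib

section
/- The biconjugate of gs_k admits the variational representation GS_k(θ) = (1/2)·min_{u ∈ B_k} Σ_{j=1}^m d_j·φ(θ_{s_j}, u_j), where B_k = {u ∈ ℝ^m : 0 ≤ u_j ≤ 1, Σ_j u_j ≤ k}, and φ(v, t) = ‖v‖₂²/t if t > 0, φ(v,0) = 0 if v = 0, and φ(v,t) = +∞ otherwise. In particular the minimum over B_k is attained. -/
/-!
The conjugate of `gs_k` is `y ↦ max_{|S| ≤ k} Σ_{j ∈ S} ‖y_{s_j}‖² / (2 d_j)`.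
For `u ∈ B_k`, Young's inequality `⟨θ_j, y_j⟩ ≤ d_j ‖θ_j‖² / (2 u_j) + u_j ‖y_j‖² / (2 d_j)` on each
group, together with `Σ_j u_j a_j ≤ max_{|T| ≤ k} Σ_{j ∈ T} a_j` for `a ≥ 0`, bounds `gs_k**` by
the objective at `u`. Equality is attained by water-filling: with `b_j = d_j ‖θ_{s_j}‖²`, take
`u_j = min 1 (√b_j / λ)` with the level `λ` fixed by `Σ_j u_j = k` (intermediate value theorem),
or the indicator of the nonzero groups if there are at most `k` of them; the dual point
`y_{s_j} = d_j θ_{s_j} / u_j` then makes the Fenchel–Young inequality tight.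
-/

open Finset

noncomputable section
open scoped Classical BigOperators

/-- Keep only the entries of `θ` in the index set `s`, zero out the rest. -/
def groupProj {n : ℕ} (s : Finset (Fin n)) (θ : Fin n → ℝ) : Fin n → ℝ :=
  fun i => if i ∈ s then θ i else 0

/-- Number of groups of `θ` (w.r.t. the groups `s`) that are nonzero. -/
def nnzGroups {n m : ℕ} (s : Fin m → Finset (Fin n)) (θ : Fin n → ℝ) : ℕ :=
  (Finset.univ.filter fun j => groupProj (s j) θ ≠ 0).card

/-- The indicator-augmented weighted group sparse function `gs_k`. -/
def gsk {n m : ℕ} (s : Fin m → Finset (Fin n)) (d : Fin m → ℝ) (k : ℕ)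
    (θ : Fin n → ℝ) : EReal :=
  if nnzGroups s θ ≤ k then
    (((1 : ℝ) / 2) * ∑ j, d j * ∑ i ∈ s j, (θ i) ^ 2 : ℝ) else ⊤

/-- Fenchel conjugate of an extended-real-valued function on `ℝⁿ`. -/
def fconj {n : ℕ} (f : (Fin n → ℝ) → EReal) (y : Fin n → ℝ) : EReal :=
  ⨆ θ : Fin n → ℝ, ((∑ i, y i * θ i : ℝ) : EReal) - f θ

/-- Perspective of the squared Euclidean norm. -/
def phi {n : ℕ} (v : Fin n → ℝ) (t : ℝ) : EReal :=
  if 0 < t then ((∑ i, (v i) ^ 2) / t : ℝ)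
  else if v = 0 ∧ t = 0 then (0 : EReal) else ⊤

/-- `ℓ₀` "norm": number of nonzero coordinates. -/
def l0norm {n : ℕ} (t : Fin n → ℝ) : ℕ :=
  (Finset.univ.filter fun i => t i ≠ 0).card

/-- The (unstructured) sparse function `s_k`. -/
def sparseFun {m : ℕ} (k : ℕ) (x : Fin m → ℝ) : EReal :=
  if l0norm x ≤ k then (((1 : ℝ) / 2) * ∑ i, (x i) ^ 2 : ℝ) else ⊤

/-- The constraint set `B_k`. -/
def Bk (m k : ℕ) : Set (Fin m → ℝ) :=
  {u | (∀ j, 0 ≤ u j ∧ u j ≤ 1) ∧ (∑ j, u j) ≤ (k : ℝ)}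

theorem EReal.coe_finsetSum {ι : Type*} (s : Finset ι) (f : ι → ℝ) :
    ((∑ i ∈ s, f i : ℝ) : EReal) = ∑ i ∈ s, (f i : EReal) :=
  map_sum (⟨⟨Real.toEReal, EReal.coe_zero⟩, EReal.coe_add⟩ : ℝ →+ EReal) f s

lemma mul_le_sq_div_add_sq_div {p q : ℝ} (hp : 0 < p) (hq : 0 < q) (x y : ℝ) :
    x * y ≤ p * x ^ 2 / (2 * q) + q * y ^ 2 / (2 * p) := by
  rw [div_add_div _ _ (by positivity) (by positivity), le_div_iff₀ (by positivity)]
  nlinarith [sq_nonneg (p * x - q * y), mul_pos hp hq]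

lemma sum_mul_le_sum_sq_div_add_sum_sq_div {ι : Type*} (s : Finset ι) {p q : ℝ} (hp : 0 < p)
    (hq : 0 < q) (x y : ι → ℝ) :
    ∑ i ∈ s, x i * y i ≤ p * (∑ i ∈ s, x i ^ 2) / (2 * q) + q * (∑ i ∈ s, y i ^ 2) / (2 * p) := by
  simp only [Finset.mul_sum, Finset.sum_div, ← Finset.sum_add_distrib]
  exact Finset.sum_le_sum fun i _ => mul_le_sq_div_add_sq_div hp hq (x i) (y i)

lemma groupProj_eq_zero_iff {n : ℕ} {s : Finset (Fin n)} {θ : Fin n → ℝ} :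
    groupProj s θ = 0 ↔ ∀ i ∈ s, θ i = 0 := by
  simp only [funext_iff, groupProj, Pi.zero_apply, ite_eq_right_iff]

lemma groupProj_eq_zero_iff_sum_sq {n : ℕ} {s : Finset (Fin n)} {θ : Fin n → ℝ} :
    groupProj s θ = 0 ↔ ∑ i ∈ s, θ i ^ 2 = 0 := by
  rw [groupProj_eq_zero_iff, Finset.sum_eq_zero_iff_of_nonneg fun i _ => sq_nonneg (θ i)]
  simp

lemma sum_sq_groupProj {n : ℕ} (s : Finset (Fin n)) (θ : Fin n → ℝ) :
    ∑ i, groupProj s θ i ^ 2 = ∑ i ∈ s, θ i ^ 2 := by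
  simp [groupProj, ite_pow, Finset.sum_ite_mem]

section Groups

variable {n m : ℕ} {s : Fin m → Finset (Fin n)}

lemma sum_eq_sum_sum_of_partition (hdisj : ∀ j j', j ≠ j' → Disjoint (s j) (s j'))
    (hcover : ∀ i, ∃ j, i ∈ s j) (f : Fin n → ℝ) : ∑ i, f i = ∑ j, ∑ i ∈ s j, f i := by
  rw [← Finset.sum_biUnion fun j _ j' _ hjj' => hdisj j j' hjj']
  congr 1
  ext i
  simpa using hcover i

def blockVec (s : Fin m → Finset (Fin n)) (w : Fin m → Fin n → ℝ) : Fin n → ℝ :=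
  fun i => ∑ j, if i ∈ s j then w j i else 0

lemma blockVec_apply (hdisj : ∀ j j', j ≠ j' → Disjoint (s j) (s j'))
    (w : Fin m → Fin n → ℝ) {i : Fin n} {j : Fin m} (hi : i ∈ s j) :
    blockVec s w i = w j i := by
  rw [blockVec, Finset.sum_eq_single j (fun j' _ hj' => if_neg fun hi' =>
    Finset.disjoint_left.1 (hdisj j' j hj') hi' hi) (by simp), if_pos hi]

end Groups

lemma phi_eq_coe {n : ℕ} {v : Fin n → ℝ} {t : ℝ} (ht : 0 ≤ t) (hv : t = 0 → v = 0) :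
    phi v t = ((∑ i, v i ^ 2) / t : ℝ) := by
  rcases ht.lt_or_eq with ht | rfl
  · exact if_pos ht
  · simp [phi, hv rfl]

lemma phi_zero_right {n : ℕ} {v : Fin n → ℝ} (hv : v ≠ 0) : phi v 0 = ⊤ := by
  simp [phi, hv]

lemma phi_nonneg {n : ℕ} (v : Fin n → ℝ) (t : ℝ) : 0 ≤ phi v t := by
  unfold phi
  split_ifs with ht
  · exact EReal.coe_nonneg.2 (div_nonneg (Finset.sum_nonneg fun i _ => sq_nonneg (v i)) ht.le)
  · exact le_rfl
  · exact le_top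

section Conjugate

variable {n m : ℕ} {s : Fin m → Finset (Fin n)} {d : Fin m → ℝ} {k : ℕ}

lemma fconj_gsk_le (hdisj : ∀ j j', j ≠ j' → Disjoint (s j) (s j'))
    (hcover : ∀ i, ∃ j, i ∈ s j) (hd : ∀ j, 0 < d j) {y : Fin n → ℝ} {c : ℝ}
    (hc : ∀ S : Finset (Fin m), S.card ≤ k → ∑ j ∈ S, (∑ i ∈ s j, y i ^ 2) / (2 * d j) ≤ c) :
    fconj (gsk s d k) y ≤ c := by
  refine iSup_le fun θ => ?_
  unfold gsk
  split_ifs with hθ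
  swap
  · rw [EReal.sub_top]
    exact bot_le
  rw [← EReal.coe_sub, EReal.coe_le_coe_iff]
  set S := univ.filter fun j => groupProj (s j) θ ≠ 0
  have hoff : ∀ j ∉ S, ∀ i ∈ s j, θ i = 0 := fun j hj =>
    groupProj_eq_zero_iff.1 (by simpa [S] using hj)
  calc ∑ i, y i * θ i - 1 / 2 * ∑ j, d j * ∑ i ∈ s j, θ i ^ 2
      = ∑ j, (∑ i ∈ s j, y i * θ i - d j * (∑ i ∈ s j, θ i ^ 2) / 2) := by
        rw [sum_eq_sum_sum_of_partition hdisj hcover, Finset.mul_sum, ← Finset.sum_sub_distrib]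
        congr! 2
        ring
    _ = ∑ j ∈ S, (∑ i ∈ s j, y i * θ i - d j * (∑ i ∈ s j, θ i ^ 2) / 2) := by
        refine (Finset.sum_subset (subset_univ S) fun j _ hj => ?_).symm
        rw [Finset.sum_eq_zero fun i hi => by rw [hoff j hj i hi, mul_zero],
          Finset.sum_eq_zero fun i hi => by rw [hoff j hj i hi]; ring]
        ring
    _ ≤ ∑ j ∈ S, (∑ i ∈ s j, y i ^ 2) / (2 * d j) := by
        refine Finset.sum_le_sum fun j _ => ?_
        have := sum_mul_le_sum_sq_div_add_sum_sq_div (s j) one_pos (hd j) y θ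
        simp only [one_mul, mul_one] at this
        linarith
    _ ≤ c := hc S hθ

lemma le_fconj_gsk (hdisj : ∀ j j', j ≠ j' → Disjoint (s j) (s j'))
    (hcover : ∀ i, ∃ j, i ∈ s j) (hd : ∀ j, 0 < d j) (y : Fin n → ℝ) {T : Finset (Fin m)}
    (hT : T.card ≤ k) :
    ((∑ j ∈ T, (∑ i ∈ s j, y i ^ 2) / (2 * d j) : ℝ) : EReal) ≤ fconj (gsk s d k) y := by
  set θ := blockVec s fun j i => if j ∈ T then y i / d j else 0
  have hθ : ∀ j, ∀ i ∈ s j, θ i = if j ∈ T then y i / d j else 0 := fun j i hi =>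
    blockVec_apply hdisj _ hi
  have hnnz : nnzGroups s θ ≤ k := by
    refine (card_le_card fun j hj => ?_).trans hT
    by_contra hjT
    exact (mem_filter.1 hj).2 (groupProj_eq_zero_iff.2 fun i hi => by rw [hθ j i hi, if_neg hjT])
  set w : Fin m → ℝ := fun j => if j ∈ T then (∑ i ∈ s j, y i ^ 2) / d j else 0
  have hinner : ∀ j, ∑ i ∈ s j, y i * θ i = w j := by
    intro j
    by_cases hj : j ∈ T
    · simp only [w, if_pos hj, Finset.sum_div]
      exact Finset.sum_congr rfl fun i hi => by rw [hθ j i hi, if_pos hj]; ring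
    · rw [Finset.sum_eq_zero fun i hi => by rw [hθ j i hi, if_neg hj, mul_zero]]
      simp [w, hj]
  have henergy : ∀ j, d j * ∑ i ∈ s j, θ i ^ 2 = w j := by
    intro j
    have hdj := (hd j).ne'
    by_cases hj : j ∈ T
    · simp only [w, if_pos hj, Finset.sum_div, Finset.mul_sum]
      exact Finset.sum_congr rfl fun i hi => by rw [hθ j i hi, if_pos hj]; field_simp
    · rw [Finset.sum_eq_zero fun i hi => by rw [hθ j i hi, if_neg hj]; ring]
      simp [w, hj]
  refine le_trans (le_of_eq ?_)
    (le_iSup (fun θ' => ((∑ i, y i * θ' i : ℝ) : EReal) - gsk s d k θ') θ)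
  rw [gsk, if_pos hnnz, ← EReal.coe_sub, sum_eq_sum_sum_of_partition hdisj hcover,
    EReal.coe_eq_coe_iff]
  simp only [hinner, henergy, w, Finset.sum_ite_mem, univ_inter]
  rw [Finset.mul_sum, ← Finset.sum_sub_distrib]
  exact Finset.sum_congr rfl fun j _ => by ring

end Conjugate

lemma exists_card_eq_forall_le {ι β : Type*} [Fintype ι] [LinearOrder β] (a : ι → β) :
    ∀ r ≤ Fintype.card ι, ∃ T : Finset ι, T.card = r ∧ ∀ j ∈ T, ∀ j' ∉ T, a j' ≤ a j := by
  intro r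
  induction r with
  | zero => exact fun _ => ⟨∅, card_empty, by simp⟩
  | succ r ih =>
    intro hr
    obtain ⟨T, hcard, hT⟩ := ih (Nat.le_of_succ_le hr)
    have hne : Tᶜ.Nonempty := by
      rw [← card_pos, card_compl, hcard]
      omega
    obtain ⟨j₀, hj₀, hmax⟩ := exists_max_image Tᶜ a hne
    refine ⟨insert j₀ T, by rw [card_insert_of_notMem (mem_compl.1 hj₀), hcard], ?_⟩
    intro j hj j' hj'
    rw [mem_insert, not_or] at hj'
    rcases mem_insert.1 hj with rfl | hj
    · exact hmax j' (mem_compl.2 hj'.2)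
    · exact hT j hj j' hj'.2

lemma exists_card_le_sum_mul_le_sum {m k : ℕ} {a u : Fin m → ℝ} (ha : ∀ j, 0 ≤ a j)
    (hu : u ∈ Bk m k) : ∃ T : Finset (Fin m), T.card ≤ k ∧ ∑ j, u j * a j ≤ ∑ j ∈ T, a j := by
  obtain ⟨hu01, husum⟩ := hu
  obtain ⟨T, hcard, hsep⟩ := exists_card_eq_forall_le a (min k m) (by simp)
  have husumT : ∑ j, u j ≤ T.card := by
    rw [hcard, Nat.cast_min]
    refine le_min husum ?_
    simpa using Finset.sum_le_sum fun j (_ : j ∈ univ) => (hu01 j).2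
  obtain ⟨τ, hτ0, hτT, hτTc⟩ : ∃ τ, 0 ≤ τ ∧ (∀ j ∈ T, τ ≤ a j) ∧ ∀ j ∉ T, a j ≤ τ := by
    rcases Tᶜ.eq_empty_or_nonempty with h | h
    · exact ⟨0, le_rfl, fun j _ => ha j, fun j hj => by simp [← mem_compl, h] at hj⟩
    · obtain ⟨j₀, hj₀, hmax⟩ := exists_max_image Tᶜ a h
      exact ⟨a j₀, ha j₀, fun j hj => hsep j hj j₀ (mem_compl.1 hj₀),
        fun j hj => hmax j (mem_compl.2 hj)⟩
  refine ⟨T, hcard ▸ min_le_left k m, ?_⟩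
  calc ∑ j, u j * a j ≤ ∑ j, (u j * τ + if j ∈ T then a j - τ else 0) := by
        refine Finset.sum_le_sum fun j _ => ?_
        split_ifs with hj
        · nlinarith [hτT j hj, hu01 j]
        · nlinarith [hτTc j hj, hu01 j]
    _ = τ * ∑ j, u j + (∑ j ∈ T, a j - T.card * τ) := by
        rw [Finset.sum_add_distrib, Finset.sum_ite_mem, univ_inter, Finset.sum_sub_distrib,
          Finset.mul_sum, Finset.sum_const, nsmul_eq_mul]
        simp only [mul_comm τ]
    _ ≤ ∑ j ∈ T, a j := by nlinarith

lemma waterLevel_spec {lam r : ℝ} (hlam : 0 < lam) (hr : 0 ≤ r) :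
    (min 1 (r / lam) = 0 → r = 0) ∧
    r ^ 2 / min 1 (r / lam) ^ 2 ≤ lam ^ 2 + max 0 (r ^ 2 - lam ^ 2) ∧
    r ^ 2 / min 1 (r / lam) = lam ^ 2 * min 1 (r / lam) + max 0 (r ^ 2 - lam ^ 2) := by
  rcases le_or_gt lam r with hle | hlt
  · have hu : min 1 (r / lam) = 1 := min_eq_left ((one_le_div hlam).2 hle)
    have hmax : max 0 (r ^ 2 - lam ^ 2) = r ^ 2 - lam ^ 2 := max_eq_right (by nlinarith)
    rw [hu, hmax]
    refine ⟨by simp, by simp, by ring⟩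
  · have hu : min 1 (r / lam) = r / lam := min_eq_right ((div_le_one hlam).2 hlt.le)
    have hmax : max 0 (r ^ 2 - lam ^ 2) = 0 := max_eq_left (by nlinarith)
    rw [hu, hmax, add_zero, add_zero]
    rcases hr.eq_or_lt with rfl | hr
    · simp [sq_nonneg]
    · refine ⟨fun h => by simp [hlam.ne', hr.ne'] at h, le_of_eq (by field_simp), by field_simp⟩

lemma exists_waterLevel {m k : ℕ} (hk : 1 ≤ k) {b : Fin m → ℝ} (hb : ∀ j, 0 ≤ b j)
    (hsupp : k < (univ.filter fun j => b j ≠ 0).card) :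
    ∃ lam, 0 < lam ∧ ∑ j, min 1 (√(b j) / lam) = k := by
  set P := univ.filter fun j => b j ≠ 0
  obtain ⟨j₁, hj₁P, hj₁min⟩ := exists_min_image P (fun j => √(b j)) (card_pos.1 (by omega))
  have hlam₁ : 0 < √(b j₁) :=
    Real.sqrt_pos.2 ((hb j₁).lt_of_ne (Ne.symm (mem_filter.1 hj₁P).2))
  set lam₂ := max √(b j₁) ((∑ j, √(b j)) / k)
  have hk0 : (0 : ℝ) < k := by exact_mod_cast hk
  set g : ℝ → ℝ := fun lam => ∑ j, min 1 (√(b j) / lam)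
  have hg_cont : ContinuousOn g (Set.Icc √(b j₁) lam₂) :=
    continuousOn_finsetSum _ fun j _ => continuousOn_const.inf (continuousOn_const.div
      continuousOn_id fun x hx => (hlam₁.trans_le hx.1).ne')
  have hg₂ : g lam₂ ≤ k := by
    have hlam₂ : 0 < lam₂ := hlam₁.trans_le (le_max_left _ _)
    calc g lam₂ ≤ ∑ j, √(b j) / lam₂ := Finset.sum_le_sum fun j _ => min_le_right _ _
      _ ≤ k := by
        rw [← Finset.sum_div, div_le_iff₀ hlam₂, mul_comm, ← div_le_iff₀ hk0]
        exact le_max_right _ _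
  have hg₁ : (k : ℝ) ≤ g √(b j₁) := by
    calc (k : ℝ) ≤ P.card := by exact_mod_cast hsupp.le
      _ = ∑ j ∈ P, min 1 (√(b j) / √(b j₁)) := by
        rw [Finset.card_eq_sum_ones, Nat.cast_sum, Nat.cast_one]
        exact Finset.sum_congr rfl fun j hj =>
          (min_eq_left ((one_le_div hlam₁).2 (hj₁min j hj))).symm
      _ ≤ g √(b j₁) := Finset.sum_le_sum_of_subset_of_nonneg (subset_univ P) fun j _ _ =>
        le_min zero_le_one (div_nonneg (Real.sqrt_nonneg _) hlam₁.le)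
  obtain ⟨lam, hlam, hglam⟩ := intermediate_value_Icc' (le_max_left _ _) hg_cont ⟨hg₂, hg₁⟩
  exact ⟨lam, hlam₁.trans_le hlam.1, hglam⟩

-- `μ` plays the role of the Lagrange multiplier of the constraint `∑ j, u j ≤ k`.
lemma exists_waterFilling {m k : ℕ} (hk : 1 ≤ k) {b : Fin m → ℝ} (hb : ∀ j, 0 ≤ b j) :
    ∃ μ : ℝ, 0 ≤ μ ∧ ∃ u ∈ Bk m k, μ * ∑ j, u j = μ * k ∧ ∀ j, (u j = 0 → b j = 0) ∧
      b j / u j ^ 2 ≤ μ + max 0 (b j - μ) ∧ b j / u j = μ * u j + max 0 (b j - μ) := by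
  by_cases hsupp : (univ.filter fun j => b j ≠ 0).card ≤ k
  · refine ⟨0, le_rfl, fun j => if b j = 0 then 0 else 1, ⟨fun j => ?_, ?_⟩, by simp,
      fun j => ?_⟩
    · by_cases hbj : b j = 0 <;> simp [hbj]
    · calc ∑ j, (if b j = 0 then (0 : ℝ) else 1) = (univ.filter fun j => b j ≠ 0).card := by
            simp [Finset.sum_ite]
        _ ≤ k := by exact_mod_cast hsupp
    · by_cases hbj : b j = 0 <;> simp [hbj, hb j]
  obtain ⟨lam, hlam, hsum⟩ := exists_waterLevel hk hb (not_le.1 hsupp)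
  refine ⟨lam ^ 2, sq_nonneg lam, fun j => min 1 (√(b j) / lam),
    ⟨fun j => ⟨le_min zero_le_one (div_nonneg (Real.sqrt_nonneg _) hlam.le), min_le_left _ _⟩,
      hsum.le⟩, congrArg _ hsum, fun j => ?_⟩
  obtain ⟨h0, hle, heq⟩ := waterLevel_spec hlam (Real.sqrt_nonneg (b j))
  rw [Real.sq_sqrt (hb j)] at hle heq
  exact ⟨fun h => Real.sqrt_eq_zero (hb j) |>.1 (h0 h), hle, heq⟩

lemma sum_div_sq_le_sum_div_of_waterFilling {m k : ℕ} {b u : Fin m → ℝ} {μ : ℝ} (hμ : 0 ≤ μ)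
    (hlevel : μ * ∑ j, u j = μ * k) (hle : ∀ j, b j / u j ^ 2 ≤ μ + max 0 (b j - μ))
    (heq : ∀ j, b j / u j = μ * u j + max 0 (b j - μ)) {S : Finset (Fin m)}
    (hS : S.card ≤ k) : ∑ j ∈ S, b j / u j ^ 2 ≤ ∑ j, b j / u j :=
  calc ∑ j ∈ S, b j / u j ^ 2 ≤ ∑ j ∈ S, (μ + max 0 (b j - μ)) := Finset.sum_le_sum fun j _ => hle j
    _ = S.card * μ + ∑ j ∈ S, max 0 (b j - μ) := by
      rw [Finset.sum_add_distrib, Finset.sum_const, nsmul_eq_mul]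
    _ ≤ k * μ + ∑ j, max 0 (b j - μ) := by
      refine add_le_add (mul_le_mul_of_nonneg_right (by exact_mod_cast hS) hμ) ?_
      exact Finset.sum_le_sum_of_subset_of_nonneg (subset_univ S) fun j _ _ => le_max_left _ _
    _ = ∑ j, b j / u j := by
      rw [Finset.sum_congr rfl fun j _ => heq j, Finset.sum_add_distrib, ← Finset.mul_sum, hlevel,
        mul_comm]

section Variational

variable {n m : ℕ} {s : Fin m → Finset (Fin n)} {d : Fin m → ℝ} {k : ℕ}

def variationalObjective (s : Fin m → Finset (Fin n)) (d : Fin m → ℝ) (θ : Fin n → ℝ)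
    (u : Fin m → ℝ) : EReal :=
  (((1 : ℝ) / 2 : ℝ) : EReal) * ∑ j, ((d j : ℝ) : EReal) * phi (groupProj (s j) θ) (u j)

lemma variationalObjective_eq_coe {θ : Fin n → ℝ} {u : Fin m → ℝ} (hu : ∀ j, 0 ≤ u j)
    (hfin : ∀ j, u j = 0 → groupProj (s j) θ = 0) :
    variationalObjective s d θ u = ((∑ j, d j * (∑ i ∈ s j, θ i ^ 2) / u j) / 2 : ℝ) := by
  simp only [variationalObjective, phi_eq_coe (hu _) (hfin _), sum_sq_groupProj, ← EReal.coe_mul,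
    ← EReal.coe_finsetSum, EReal.coe_eq_coe_iff]
  rw [Finset.sum_congr rfl fun j _ => (mul_div_assoc _ _ _).symm]
  ring

lemma variationalObjective_eq_top (hd : ∀ j, 0 < d j) {θ : Fin n → ℝ} {u : Fin m → ℝ}
    {j : Fin m} (hj : u j = 0) (hθ : groupProj (s j) θ ≠ 0) :
    variationalObjective s d θ u = ⊤ := by
  have hterm : ((d j : ℝ) : EReal) * phi (groupProj (s j) θ) (u j) = ⊤ := by
    rw [hj, phi_zero_right hθ, EReal.coe_mul_top_of_pos (hd j)]
  have hsum : ∑ j, ((d j : ℝ) : EReal) * phi (groupProj (s j) θ) (u j) = ⊤ :=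
    top_le_iff.1 (hterm ▸ Finset.single_le_sum
      (f := fun j => ((d j : ℝ) : EReal) * phi (groupProj (s j) θ) (u j)) (fun j _ =>
      mul_nonneg (EReal.coe_nonneg.2 (hd j).le) (phi_nonneg _ _)) (mem_univ j))
  rw [variationalObjective, hsum, EReal.coe_mul_top_of_pos (by norm_num)]

lemma fconj_fconj_gsk_le_variationalObjective (hdisj : ∀ j j', j ≠ j' → Disjoint (s j) (s j'))
    (hcover : ∀ i, ∃ j, i ∈ s j) (hd : ∀ j, 0 < d j) (θ : Fin n → ℝ) {u : Fin m → ℝ}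
    (hu : u ∈ Bk m k) : fconj (fconj (gsk s d k)) θ ≤ variationalObjective s d θ u := by
  by_cases hfin : ∀ j, u j = 0 → groupProj (s j) θ = 0
  swap
  · push Not at hfin
    obtain ⟨j, hj, hθ⟩ := hfin
    rw [variationalObjective_eq_top hd hj hθ]
    exact le_top
  rw [variationalObjective_eq_coe (fun j => (hu.1 j).1) hfin]
  refine iSup_le fun y => ?_
  set a : Fin m → ℝ := fun j => (∑ i ∈ s j, y i ^ 2) / (2 * d j)
  obtain ⟨T, hT, hTa⟩ := exists_card_le_sum_mul_le_sum (a := a)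
    (fun j => div_nonneg (Finset.sum_nonneg fun i _ => sq_nonneg (y i)) (by linarith [hd j])) hu
  have hinner : ∑ i, θ i * y i ≤ (∑ j, d j * (∑ i ∈ s j, θ i ^ 2) / u j) / 2 + ∑ j, u j * a j := by
    rw [sum_eq_sum_sum_of_partition hdisj hcover, Finset.sum_div, ← Finset.sum_add_distrib]
    refine Finset.sum_le_sum fun j _ => ?_
    rcases (hu.1 j).1.eq_or_lt with hj | hj
    · have hθ := groupProj_eq_zero_iff.1 (hfin j hj.symm)
      rw [Finset.sum_eq_zero fun i hi => by rw [hθ i hi, zero_mul], ← hj]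
      simp
    · exact (sum_mul_le_sum_sq_div_add_sum_sq_div (s j) (hd j) hj θ y).trans_eq
        (by simp only [a]; ring)
  calc ((∑ i, θ i * y i : ℝ) : EReal) - fconj (gsk s d k) y
      ≤ ((∑ i, θ i * y i : ℝ) : EReal) - ((∑ j ∈ T, a j : ℝ) : EReal) :=
        EReal.sub_le_sub le_rfl (le_fconj_gsk hdisj hcover hd y hT)
    _ ≤ ((∑ j, d j * (∑ i ∈ s j, θ i ^ 2) / u j) / 2 : ℝ) := by
        rw [← EReal.coe_sub, EReal.coe_le_coe_iff]
        linarith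

lemma exists_variationalObjective_le_fconj_fconj_gsk (hk : 1 ≤ k)
    (hdisj : ∀ j j', j ≠ j' → Disjoint (s j) (s j')) (hcover : ∀ i, ∃ j, i ∈ s j)
    (hd : ∀ j, 0 < d j) (θ : Fin n → ℝ) :
    ∃ u ∈ Bk m k, variationalObjective s d θ u ≤ fconj (fconj (gsk s d k)) θ := by
  set b : Fin m → ℝ := fun j => d j * ∑ i ∈ s j, θ i ^ 2
  obtain ⟨μ, hμ, u, hu, hlevel, hspec⟩ := exists_waterFilling hk (b := b) fun j =>
    mul_nonneg (hd j).le (Finset.sum_nonneg fun i _ => sq_nonneg (θ i))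
  have hfin : ∀ j, u j = 0 → groupProj (s j) θ = 0 := fun j hj =>
    groupProj_eq_zero_iff_sum_sq.2 ((mul_eq_zero.1 ((hspec j).1 hj)).resolve_left (hd j).ne')
  refine ⟨u, hu, ?_⟩
  rw [variationalObjective_eq_coe (fun j => (hu.1 j).1) hfin]
  -- on a group with `u j = 0` the junk value `x / 0 = 0` gives `y = 0`, as it should
  set y := blockVec s fun j i => d j * θ i / u j
  have hy : ∀ j, ∀ i ∈ s j, y i = d j * θ i / u j := fun j i hi => blockVec_apply hdisj _ hi
  have hinner : ∑ i, θ i * y i = ∑ j, b j / u j := by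
    rw [sum_eq_sum_sum_of_partition hdisj hcover]
    refine Finset.sum_congr rfl fun j _ => ?_
    simp only [b, Finset.mul_sum, Finset.sum_div]
    exact Finset.sum_congr rfl fun i hi => by rw [hy j i hi]; ring
  have henergy : ∀ j, (∑ i ∈ s j, y i ^ 2) / (2 * d j) = b j / u j ^ 2 / 2 := by
    intro j
    have hdj := (hd j).ne'
    simp only [b, Finset.mul_sum, Finset.sum_div]
    exact Finset.sum_congr rfl fun i hi => by rw [hy j i hi]; field_simp
  have hconj : fconj (gsk s d k) y ≤ ((∑ j, b j / u j / 2 : ℝ) : EReal) := by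
    refine fconj_gsk_le hdisj hcover hd fun S hS => ?_
    simp only [henergy, ← Finset.sum_div]
    exact div_le_div_of_nonneg_right
      (sum_div_sq_le_sum_div_of_waterFilling hμ hlevel (fun j => (hspec j).2.1)
        (fun j => (hspec j).2.2) hS) zero_le_two
  calc (((∑ j, b j / u j) / 2 : ℝ) : EReal)
      = ((∑ i, θ i * y i : ℝ) : EReal) - ((∑ j, b j / u j / 2 : ℝ) : EReal) := by
        rw [hinner, ← EReal.coe_sub, ← Finset.sum_div]
        ring_nf
    _ ≤ ((∑ i, θ i * y i : ℝ) : EReal) - fconj (gsk s d k) y := EReal.sub_le_sub le_rfl hconj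
    _ ≤ fconj (fconj (gsk s d k)) θ :=
        le_iSup (fun y => ((∑ i, θ i * y i : ℝ) : EReal) - fconj (gsk s d k) y) y

end Variational

theorem biconj_variational_general {n m : ℕ} (k : ℕ) (hk1 : 1 ≤ k)
    (s : Fin m → Finset (Fin n))
    (hdisj : ∀ j j', j ≠ j' → Disjoint (s j) (s j'))
    (hcover : ∀ i, ∃ j, i ∈ s j)
    (d : Fin m → ℝ) (hd : ∀ j, 0 < d j)
    (θ : Fin n → ℝ) :
    IsLeast
      {x : EReal | ∃ u ∈ Bk m k,
        x = (((1 : ℝ) / 2 : ℝ) : EReal) * ∑ j, ((d j : ℝ) : EReal) * phi (groupProj (s j) θ) (u j)}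
      (fconj (fconj (gsk s d k)) θ) := by
  obtain ⟨u, hu, hle⟩ := exists_variationalObjective_le_fconj_fconj_gsk hk1 hdisj hcover hd θ
  refine ⟨⟨u, hu, le_antisymm ?_ hle⟩, ?_⟩
  · exact fconj_fconj_gsk_le_variationalObjective hdisj hcover hd θ hu
  · rintro _ ⟨v, hv, rfl⟩
    exact fconj_fconj_gsk_le_variationalObjective hdisj hcover hd θ hv

/-- the biconjugate `GS_k = gs_k**` admits the variational
representation `GS_k(θ) = (1/2)·min_{u ∈ B_k} Σ_j d_j·φ(θ_{s_j}, u_j)`, the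
minimum being attained. -/
theorem biconj_variational {n m : ℕ} (k : ℕ) (hk1 : 1 ≤ k) (hkm : k ≤ m)
    (s : Fin m → Finset (Fin n))
    (hdisj : ∀ j j', j ≠ j' → Disjoint (s j) (s j'))
    (hcover : ∀ i, ∃ j, i ∈ s j)
    (d : Fin m → ℝ) (hd : ∀ j, 0 < d j)
    (θ : Fin n → ℝ) :
    IsLeast
      {x : EReal | ∃ u ∈ Bk m k,
        x = (((1 : ℝ) / 2 : ℝ) : EReal) * ∑ j, ((d j : ℝ) : EReal) * phi (groupProj (s j) θ) (u j)}
      (fconj (fconj (gsk s d k)) θ) :=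
  biconj_variational_general k hk1 s hdisj hcover d hd θ
end
end

section
/- In the singleton-groups case with unit weights (m = n, d_j = 1), the sparse envelope satisfies S_k(θ) = (1/2)‖θ‖₂² whenever ‖θ‖₀ ≤ k, and S_k(θ) < (1/2)‖θ‖₂² + δ_{‖θ‖₀≤k}(θ) = +∞ for any θ with ‖θ‖₀ > k; in particular S_k is finite everywhere on ℝⁿ. -/
open Finset

noncomputable section
open scoped Classical BigOperators

/-! Fenchel–Young gives `S_k ≤ s_k`, so `S_k θ = ½‖θ‖₂²` on `k`-sparse vectors. Since
`s_k ≥ ½‖·‖₂²`, also `s_k* ≤ ½‖·‖₂²` and `S_k ≥ ½‖·‖₂²` everywhere. For the upper bound, as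
`k ≥ 1` every 1-sparse vector is admissible, so `s_k*(y) ≥ ½‖y‖_∞²`, and Hölder's inequality
gives `S_k θ ≤ sup_y (‖θ‖₁‖y‖_∞ - ½‖y‖_∞²) = ½‖θ‖₁²`. -/

theorem EReal.coe_sub_le_comm (a : ℝ) {x y : EReal} (h : (a : EReal) - x ≤ y) :
    (a : EReal) - y ≤ x := by
  induction x <;> induction y <;> simp_all [← EReal.coe_sub]
  linarith

section Conjugate

variable {n : ℕ} (f : (Fin n → ℝ) → EReal)

theorem sub_le_fconj (y θ : Fin n → ℝ) : ((∑ i, y i * θ i : ℝ) : EReal) - f θ ≤ fconj f y :=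
  le_iSup (fun θ => ((∑ i, y i * θ i : ℝ) : EReal) - f θ) θ

theorem fconj_fconj_le (θ : Fin n → ℝ) : fconj (fconj f) θ ≤ f θ :=
  iSup_le fun y => EReal.coe_sub_le_comm _ <| by
    simpa only [mul_comm] using sub_le_fconj f y θ

end Conjugate

section SparseFun

variable {n k : ℕ}

theorem fconj_sparseFun_le (y : Fin n → ℝ) :
    fconj (sparseFun k) y ≤ (((1 : ℝ) / 2 * ∑ i, y i ^ 2 : ℝ) : EReal) := by
  refine iSup_le fun x => ?_
  unfold sparseFun
  split_ifs
  · rw [← EReal.coe_sub, EReal.coe_le_coe_iff, mul_sum, mul_sum, ← sum_sub_distrib]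
    exact sum_le_sum fun i _ => by nlinarith [sq_nonneg (y i - x i)]
  · simp

theorem l0norm_single_le_one (j : Fin n) (c : ℝ) : l0norm (Pi.single j c) ≤ 1 := by
  refine (card_le_card fun i hi => ?_).trans (card_singleton j).le
  by_contra hij
  simp_all [Pi.single_apply]

theorem half_sq_le_fconj_sparseFun (hk : 1 ≤ k) (y : Fin n → ℝ) (j : Fin n) :
    (((1 : ℝ) / 2 * y j ^ 2 : ℝ) : EReal) ≤ fconj (sparseFun k) y := by
  refine le_trans (le_of_eq ?_) (sub_le_fconj (sparseFun k) y (Pi.single j (y j)))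
  rw [sparseFun, if_pos ((l0norm_single_le_one j _).trans hk), ← EReal.coe_sub,
    EReal.coe_eq_coe_iff]
  simp [Pi.single_apply, ite_pow]
  ring

theorem half_sq_le_fconj_fconj_sparseFun (θ : Fin n → ℝ) :
    (((1 : ℝ) / 2 * ∑ i, θ i ^ 2 : ℝ) : EReal) ≤ fconj (fconj (sparseFun k)) θ := by
  refine le_trans ?_ (sub_le_fconj (fconj (sparseFun k)) θ θ)
  refine le_trans ?_ (EReal.sub_le_sub le_rfl (fconj_sparseFun_le θ))
  rw [← EReal.coe_sub, EReal.coe_le_coe_iff]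
  simp only [← sq]
  linarith

theorem fconj_fconj_sparseFun_le_half_sq_sum_abs [Nonempty (Fin n)] (hk : 1 ≤ k)
    (θ : Fin n → ℝ) :
    fconj (fconj (sparseFun k)) θ ≤ (((1 : ℝ) / 2 * (∑ i, |θ i|) ^ 2 : ℝ) : EReal) := by
  refine iSup_le fun y => ?_
  obtain ⟨j, -, hj⟩ := exists_max_image univ (fun i => |y i|) univ_nonempty
  refine (EReal.sub_le_sub le_rfl (half_sq_le_fconj_sparseFun hk y j)).trans ?_
  rw [← EReal.coe_sub, EReal.coe_le_coe_iff]
  have hpair : ∑ i, θ i * y i ≤ (∑ i, |θ i|) * |y j| := by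
    rw [sum_mul]
    exact sum_le_sum fun i _ => (le_abs_self _).trans <| by
      rw [abs_mul]; exact mul_le_mul_of_nonneg_left (hj i (mem_univ i)) (abs_nonneg _)
  nlinarith [sq_nonneg (∑ i, |θ i| - |y j|), sq_abs (y j)]

end SparseFun

/-- the sparse envelope `S_k = s_k**` agrees with `½‖θ‖₂²` on
`k`-sparse vectors, is strictly below `s_k(θ) = +∞` on non-`k`-sparse vectors,
and is finite (real-valued) everywhere. -/
theorem sef_finite {n : ℕ} (k : ℕ) (hk1 : 1 ≤ k) (hk : k ≤ n) :
    (∀ θ : Fin n → ℝ, l0norm θ ≤ k →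
        fconj (fconj (sparseFun k)) θ = ((((1 : ℝ) / 2) * ∑ i, (θ i) ^ 2 : ℝ) : EReal))
    ∧ (∀ θ : Fin n → ℝ, k < l0norm θ →
        fconj (fconj (sparseFun k)) θ < sparseFun k θ)
    ∧ (∀ θ : Fin n → ℝ, ∃ r : ℝ, fconj (fconj (sparseFun k)) θ = ((r : ℝ) : EReal)) := by
  have : Nonempty (Fin n) := ⟨⟨0, by omega⟩⟩
  have hfinite (θ : Fin n → ℝ) : ∃ r : ℝ, fconj (fconj (sparseFun k)) θ = r :=
    ⟨_, (EReal.coe_toReal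
      (ne_top_of_le_ne_top (EReal.coe_ne_top _)
        (fconj_fconj_sparseFun_le_half_sq_sum_abs hk1 θ))
      (ne_bot_of_le_ne_bot (EReal.coe_ne_bot _) (half_sq_le_fconj_fconj_sparseFun θ))).symm⟩
  refine ⟨fun θ hθ => le_antisymm ?_ (half_sq_le_fconj_fconj_sparseFun θ), fun θ hθ => ?_,
    hfinite⟩
  · simpa only [sparseFun, if_pos hθ] using fconj_fconj_le (sparseFun k) θ
  · obtain ⟨r, hr⟩ := hfinite θ
    rw [hr, sparseFun, if_neg hθ.not_ge]
    exact EReal.coe_lt_top r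
end
end

section
/- For λ > 0 and t ∈ ℝⁿ, the proximal operator v = prox_{λGS_k}(t) satisfies: (i) ‖v_{s_j}‖₂ ≤ ‖t_{s_j}‖₂ for every group j; (ii) v_{s_j} = 0 whenever t_{s_j} = 0; and (iii) v_{s_j} is a nonnegative scalar multiple of t_{s_j} for every j (with scalar in [0, 1/(λ d_j · 0 + 1)] ⊆ [0,1]). -/
open Finset

noncomputable section
open scoped Classical BigOperators

/-!
Shrinking group `j` of `v` to any `θ_j` with `‖θ_j‖ ≤ ‖v_j‖` lowers the biconjugate `G = gs_k**`
by at least `d_j (‖v_j‖² - ‖θ_j‖²) / 2`. This is proved by trading group `j` of the variable inside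
the suprema that define the two conjugates: in `gs_k*` for the maximiser `y_j / d_j`, in `G` for a
multiple of `v_j`.

Testing the optimality of `v` against `θ_j = c t_j` with `c = ‖v_j‖ / ‖t_j‖` then gives
`⟨v_j, t_j⟩ ≥ ‖v_j‖ ‖t_j‖`, so `v_j = c t_j` by Cauchy–Schwarz; testing it against
`c' = 1 / (λ d_j + 1)`, the minimiser of `(λ d_j + 1) c² - 2 c`, shows `c ≤ c'`.
-/

lemma exists_coeff_sub_mul_add_sq_nonpos {A P R L : ℝ} (hL : 0 < L) (hA : 0 ≤ A) (hR : 0 ≤ R)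
    (hP : P ^ 2 ≤ A * R)
    (h : ∀ c, 0 ≤ c → c ^ 2 * R ≤ A → L * (A - c ^ 2 * R) + (A - 2 * P + R) ≤ (c - 1) ^ 2 * R) :
    ∃ c, 0 ≤ c ∧ c ≤ 1 / (L + 1) ∧ A - 2 * c * P + c ^ 2 * R ≤ 0 := by
  rcases hR.eq_or_lt with hR0 | hRpos
  · subst hR0
    have hP0 : P = 0 := by nlinarith
    have h0 := h 0 le_rfl (by simpa using hA)
    refine ⟨0, le_rfl, by positivity, ?_⟩
    subst hP0
    nlinarith
  set c₁ := Real.sqrt (A / R)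
  have hc₁0 : 0 ≤ c₁ := Real.sqrt_nonneg _
  have hc₁R : c₁ ^ 2 * R = A := by
    rw [Real.sq_sqrt (div_nonneg hA hRpos.le), div_mul_cancel₀ _ hRpos.ne']
  have hPc₁ : P = c₁ * R := by
    have hcs : P ≤ c₁ * R := by nlinarith [mul_nonneg hc₁0 hRpos.le]
    have htest : c₁ * R ≤ P := by nlinarith [h c₁ hc₁0 hc₁R.le]
    exact hcs.antisymm htest
  refine ⟨c₁, hc₁0, ?_, by rw [hPc₁, ← hc₁R]; linarith⟩
  by_contra! hlt
  set c := 1 / (L + 1)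
  have hc0 : 0 < c := by positivity
  have hcL : c * (L + 1) = 1 := one_div_mul_cancel (by positivity)
  have hc := h c hc0.le (by rw [← hc₁R]; gcongr)
  rw [← hc₁R, hPc₁] at hc
  have hgap : 0 < (c₁ - c) ^ 2 * (L + 1) * R := by have := sub_pos.2 hlt; positivity
  have hexpand : L * (c₁ ^ 2 * R - c ^ 2 * R) + (c₁ ^ 2 * R - 2 * (c₁ * R) + R) - (c - 1) ^ 2 * R
      = (c₁ - c) ^ 2 * (L + 1) * R := by linear_combination (2 * R * (c₁ - c)) * hcL
  linarith

lemma sum_sub_sum_eq_of_eq_off {ι : Type*} [Fintype ι] (s : Finset ι) {f g : ι → ℝ}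
    (h : ∀ i ∉ s, f i = g i) : ∑ i, f i - ∑ i, g i = ∑ i ∈ s, (f i - g i) := by
  rw [← sum_sub_distrib]
  exact (sum_subset (subset_univ s) fun i _ hi => by rw [h i hi, sub_self]).symm

section GroupVectors

variable {ι : Type*} (s : Finset ι) (x u : ι → ℝ)

lemma sum_sub_mul_sq (c : ℝ) :
    ∑ i ∈ s, (x i - c * u i) ^ 2
      = ∑ i ∈ s, x i ^ 2 - 2 * c * ∑ i ∈ s, x i * u i + c ^ 2 * ∑ i ∈ s, u i ^ 2 := by
  rw [mul_sum, mul_sum, ← sum_sub_distrib, ← sum_add_distrib]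
  exact sum_congr rfl fun i _ => by ring

lemma eq_mul_of_sum_sub_mul_sq_nonpos {c : ℝ} (h : ∑ i ∈ s, (x i - c * u i) ^ 2 ≤ 0) :
    ∀ i ∈ s, x i = c * u i := by
  have hzero := (sum_eq_zero_iff_of_nonneg fun i _ => sq_nonneg (x i - c * u i)).1
    (h.antisymm (sum_nonneg fun i _ => sq_nonneg _))
  exact fun i hi => sub_eq_zero.1 (pow_eq_zero_iff two_ne_zero |>.1 (hzero i hi))

lemma exists_eq_mul_of_forall_le {L : ℝ} (hL : 0 < L)
    (h : ∀ c, 0 ≤ c → c ^ 2 * ∑ i ∈ s, u i ^ 2 ≤ ∑ i ∈ s, x i ^ 2 →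
      L * (∑ i ∈ s, x i ^ 2 - c ^ 2 * ∑ i ∈ s, u i ^ 2) + ∑ i ∈ s, (x i - u i) ^ 2
        ≤ ∑ i ∈ s, (c * u i - u i) ^ 2) :
    ∃ c, 0 ≤ c ∧ c ≤ 1 / (L + 1) ∧ ∀ i ∈ s, x i = c * u i := by
  obtain ⟨c, hc0, hcL, hsq⟩ := exists_coeff_sub_mul_add_sq_nonpos hL
    (sum_nonneg fun i _ => sq_nonneg (x i)) (sum_nonneg fun i _ => sq_nonneg (u i))
    (sum_mul_sq_le_sq_mul_sq s x u) fun c hc0 hcN => by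
      have hc := h c hc0 hcN
      have hcu : ∑ i ∈ s, (c * u i - u i) ^ 2 = (c - 1) ^ 2 * ∑ i ∈ s, u i ^ 2 := by
        rw [mul_sum]
        exact sum_congr rfl fun i _ => by ring
      rwa [hcu, show ∑ i ∈ s, (x i - u i) ^ 2 = ∑ i ∈ s, (x i - 1 * u i) ^ 2 by simp,
        sum_sub_mul_sq, mul_one, one_pow, one_mul] at hc
  exact ⟨c, hc0, hcL, eq_mul_of_sum_sub_mul_sq_nonpos s x u (by rwa [sum_sub_mul_sq])⟩

end GroupVectors

-- `μ = max (ρ / r) d` is the scale of the dual witness `μ v_j` used below: `μ ≥ ρ / r` keeps the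
-- group norm from decreasing, and `μ ≥ d` makes the gain dominate `d (r² - q²) / 2`.
lemma mul_add_sq_max_div_le {d r q ρ : ℝ} (hd : 0 < d) (hr : 0 < r) (hqr : q ≤ r) :
    q * ρ + ((max (ρ / r) d) ^ 2 * r ^ 2 - ρ ^ 2) / (2 * d)
      ≤ max (ρ / r) d * r ^ 2 - d * (r ^ 2 - q ^ 2) / 2 := by
  rcases le_total (ρ / r) d with h | h
  · rw [max_eq_right h]
    have hgap : d * r ^ 2 - d * (r ^ 2 - q ^ 2) / 2 - (q * ρ + (d ^ 2 * r ^ 2 - ρ ^ 2) / (2 * d))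
        = (d * q - ρ) ^ 2 / (2 * d) := by
      field_simp
      ring
    have : 0 ≤ (d * q - ρ) ^ 2 / (2 * d) := by positivity
    linarith
  · rw [max_eq_left h]
    have hdr : d * r ≤ ρ := (le_div_iff₀ hr).1 h
    have hμ : ρ / r * r ^ 2 = ρ * r := by field_simp
    have hμ2 : (ρ / r) ^ 2 * r ^ 2 = ρ ^ 2 := by field_simp
    rw [hμ, hμ2, sub_self, zero_div, add_zero]
    nlinarith [mul_nonneg (sub_nonneg.2 hqr) (sub_nonneg.2 hdr),
      mul_nonneg hd.le (sq_nonneg (r - q))]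

lemma EReal.coe_sub_le_coe_sub_of_le_add {a b δ : ℝ} {x x' : EReal} (hx : x' ≤ x + δ)
    (hab : a + δ ≤ b) : (a : EReal) - x ≤ b - x' := by
  induction x using EReal.rec with
  | bot =>
    rw [EReal.bot_add, le_bot_iff] at hx
    simp [hx]
  | top => simp
  | coe x =>
    induction x' using EReal.rec with
    | bot => simp
    | top => exact absurd hx (by simp [← EReal.coe_add])
    | coe x' =>
      norm_cast at hx ⊢
      linarith

lemma fconj_le_fconj_add {n : ℕ} (f : (Fin n → ℝ) → EReal) {y y' : Fin n → ℝ} {δ : ℝ}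
    (h : ∀ θ, ∃ (θ' : Fin n → ℝ) (Δ : ℝ),
      f θ' ≤ f θ + Δ ∧ ∑ i, y' i * θ i + Δ ≤ ∑ i, y i * θ' i + δ) :
    fconj f y' ≤ fconj f y + δ := by
  refine iSup_le fun θ => ?_
  obtain ⟨θ', Δ, hf, hpair⟩ := h θ
  calc ((∑ i, y' i * θ i : ℝ) : EReal) - f θ
      ≤ ((∑ i, y i * θ' i + δ : ℝ) : EReal) - f θ' := EReal.coe_sub_le_coe_sub_of_le_add hf hpair
    _ = ((∑ i, y i * θ' i : ℝ) : EReal) - f θ' + δ := by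
      rw [EReal.coe_add, sub_eq_add_neg, sub_eq_add_neg, add_right_comm]
    _ ≤ fconj f y + δ := by
      gcongr
      exact le_iSup (fun θ => ((∑ i, y i * θ i : ℝ) : EReal) - f θ) θ'

lemma fconj_nonneg {n : ℕ} (f : (Fin n → ℝ) → EReal) (h0 : f 0 ≤ 0) (y : Fin n → ℝ) :
    0 ≤ fconj f y :=
  le_iSup_of_le 0 (by simpa using h0)

lemma fconj_zero_nonpos {n : ℕ} (f : (Fin n → ℝ) → EReal) (hf : ∀ θ, 0 ≤ f θ) :
    fconj f 0 ≤ 0 :=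
  iSup_le fun θ => by simpa using hf θ

lemma mul_add_le_of_le_sub {α : Type*} {G : α → EReal} {q : α → ℝ} {lam c : ℝ}
    (hlam : 0 < lam) (hG : ∀ θ, 0 ≤ G θ) {v θ₀ θ : α}
    (hv : ∀ θ, ((lam : ℝ) : EReal) * G v + (q v : EReal) ≤ ((lam : ℝ) : EReal) * G θ + q θ)
    (hθ₀ : G θ₀ ≠ ⊤) (hθ : G θ ≤ G v - c) :
    lam * c + q v ≤ q θ := by
  have real_of_ne_top : ∀ w, G w ≠ ⊤ → ∃ g : ℝ, G w = g := fun w hw =>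
    ⟨_, (EReal.coe_toReal hw (ne_bot_of_le_ne_bot (by simp) (hG w))).symm⟩
  obtain ⟨g₀, hg₀⟩ := real_of_ne_top θ₀ hθ₀
  have hvtop : G v ≠ ⊤ := by
    intro htop
    have := hv θ₀
    rw [htop, hg₀, EReal.coe_mul_top_of_pos hlam, EReal.top_add_coe, top_le_iff] at this
    exact EReal.coe_ne_top _ (by exact_mod_cast this)
  obtain ⟨g, hg⟩ := real_of_ne_top v hvtop
  rw [hg] at hθ
  obtain ⟨gθ, hgθ⟩ := real_of_ne_top θ (ne_top_of_le_ne_top (by simp [← EReal.coe_sub]) hθ)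
  have hmin := hv θ
  rw [hg, hgθ] at hmin
  rw [hgθ] at hθ
  norm_cast at hmin hθ
  linarith [mul_le_mul_of_nonneg_left hθ hlam.le]

lemma groupProj_congr {n : ℕ} {s : Finset (Fin n)} {f g : Fin n → ℝ} (h : ∀ i ∈ s, f i = g i) :
    groupProj s f = groupProj s g :=
  funext fun i => by by_cases hi : i ∈ s <;> simp [groupProj, hi, h]

lemma groupProj_eq_smul {n : ℕ} {s : Finset (Fin n)} {f g : Fin n → ℝ} {c : ℝ}
    (h : ∀ i ∈ s, f i = c * g i) : groupProj s f = c • groupProj s g :=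
  funext fun i => by by_cases hi : i ∈ s <;> simp [groupProj, hi, h]

section GroupSparse

variable {n m : ℕ} (s : Fin m → Finset (Fin n)) (d : Fin m → ℝ) (k : ℕ)

lemma gsk_nonneg (hd : ∀ j, 0 ≤ d j) (θ : Fin n → ℝ) : 0 ≤ gsk s d k θ := by
  unfold gsk
  split_ifs
  · exact EReal.coe_nonneg.2 <| mul_nonneg (by norm_num) <|
      sum_nonneg fun j _ => mul_nonneg (hd j) (sum_nonneg fun i _ => sq_nonneg _)
  · exact le_top

lemma gsk_zero : gsk s d k 0 = 0 := by
  have h0 : ∀ l, groupProj (s l) 0 = 0 := fun l => funext fun i => by simp [groupProj]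
  simp [gsk, nnzGroups, h0]

lemma gsk_piecewise_le (hdisj : ∀ j j', j ≠ j' → Disjoint (s j) (s j')) (j : Fin m)
    (w θ : Fin n → ℝ) (hw : groupProj (s j) θ = 0 → groupProj (s j) w = 0) :
    gsk s d k ((s j).piecewise w θ)
      ≤ gsk s d k θ + ((d j * (∑ i ∈ s j, w i ^ 2 - ∑ i ∈ s j, θ i ^ 2) / 2 : ℝ) : EReal) := by
  set θ' := (s j).piecewise w θ
  have hj : ∀ i ∈ s j, θ' i = w i := fun i hi => piecewise_eq_of_mem _ _ _ hi
  have hother : ∀ l ≠ j, ∀ i ∈ s l, θ' i = θ i := fun l hl i hi =>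
    piecewise_eq_of_notMem _ _ _ (disjoint_left.1 (hdisj l j hl) hi)
  have hnnz : nnzGroups s θ' ≤ nnzGroups s θ := by
    refine card_le_card fun l => ?_
    simp only [mem_filter, mem_univ, true_and]
    intro hl hθl
    by_cases hlj : l = j
    · subst hlj
      exact hl (by rw [groupProj_congr hj]; exact hw hθl)
    · exact hl (by rw [groupProj_congr (hother l hlj)]; exact hθl)
  unfold gsk
  by_cases hk : nnzGroups s θ ≤ k
  · rw [if_pos (hnnz.trans hk), if_pos hk, ← EReal.coe_add, EReal.coe_le_coe_iff]
    have hdiff : ∑ l, d l * ∑ i ∈ s l, θ' i ^ 2 - ∑ l, d l * ∑ i ∈ s l, θ i ^ 2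
        = d j * (∑ i ∈ s j, w i ^ 2 - ∑ i ∈ s j, θ i ^ 2) := by
      rw [← sum_sub_distrib, sum_eq_single j (fun l _ hl => by
        rw [sum_congr rfl fun i hi => by rw [hother l hl i hi], sub_self]) (by simp),
        sum_congr rfl fun i hi => by rw [hj i hi], mul_sub]
    linarith
  · rw [if_neg hk, EReal.top_add_coe]
    exact le_top

lemma fconj_gsk_le_add (hdisj : ∀ j j', j ≠ j' → Disjoint (s j) (s j')) {j : Fin m}
    (hdj : 0 < d j) {y y' : Fin n → ℝ} (hy : ∀ i ∉ s j, y' i = y i)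
    (hN : ∑ i ∈ s j, y i ^ 2 ≤ ∑ i ∈ s j, y' i ^ 2) :
    fconj (gsk s d k) y'
      ≤ fconj (gsk s d k) y + ((∑ i ∈ s j, y' i ^ 2 - ∑ i ∈ s j, y i ^ 2) / (2 * d j) : ℝ) := by
  refine fconj_le_fconj_add _ fun θ => ?_
  -- `y_j / d_j` maximises the group-`j` term; a vanishing group stays zero so that
  -- `nnzGroups` cannot grow
  set w : Fin n → ℝ := fun i => if groupProj (s j) θ = 0 then 0 else y i / d j with hw
  refine ⟨(s j).piecewise w θ, _, gsk_piecewise_le s d k hdisj j w θ fun hθ => ?_, ?_⟩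
  · exact funext fun i => by simp [groupProj, hw, hθ]
  suffices hgroup : ∑ i ∈ s j, (y' i * θ i - y i * w i)
      + d j * (∑ i ∈ s j, w i ^ 2 - ∑ i ∈ s j, θ i ^ 2) / 2
      ≤ (∑ i ∈ s j, y' i ^ 2 - ∑ i ∈ s j, y i ^ 2) / (2 * d j) by
    have hpair : ∑ i, y' i * θ i - ∑ i, y i * (s j).piecewise w θ i
        = ∑ i ∈ s j, (y' i * θ i - y i * w i) := by
      rw [sum_sub_sum_eq_of_eq_off (s j) fun i hi => by
        rw [hy i hi, piecewise_eq_of_notMem _ _ _ hi]]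
      exact sum_congr rfl fun i hi => by rw [piecewise_eq_of_mem _ _ _ hi]
    linarith
  by_cases hθ : groupProj (s j) θ = 0
  · have hθj : ∀ i ∈ s j, θ i = 0 := fun i hi => by simpa [groupProj, hi] using congrFun hθ i
    have hwj : ∀ i, w i = 0 := fun i => by simp [hw, hθ]
    rw [sum_eq_zero fun i hi => by rw [hθj i hi, hwj]; ring, sum_eq_zero fun i _ => by
      rw [hwj]; ring, sum_eq_zero fun i hi => by rw [hθj i hi]; ring]
    simpa using div_nonneg (sub_nonneg.2 hN) (by positivity : (0 : ℝ) ≤ 2 * d j)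
  · have hwj : ∀ i, w i = y i / d j := fun i => by simp [hw, hθ]
    simp only [hwj]
    calc _ = ∑ i ∈ s j,
          (y' i * θ i - y i * (y i / d j) + d j * ((y i / d j) ^ 2 - θ i ^ 2) / 2) := by
          rw [sum_add_distrib, ← sum_div, ← mul_sum, sum_sub_distrib, sum_sub_distrib]
      _ ≤ ∑ i ∈ s j, (y' i ^ 2 - y i ^ 2) / (2 * d j) := sum_le_sum fun i _ => by
          rw [← sub_nonneg]
          have hsq : (y' i ^ 2 - y i ^ 2) / (2 * d j)
              - (y' i * θ i - y i * (y i / d j) + d j * ((y i / d j) ^ 2 - θ i ^ 2) / 2)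
              = (y' i - d j * θ i) ^ 2 / (2 * d j) := by
            field_simp
            ring
          rw [hsq]
          positivity
      _ = _ := by rw [← sum_div, sum_sub_distrib]

lemma fconj_fconj_gsk_le_sub (hdisj : ∀ j j', j ≠ j' → Disjoint (s j) (s j')) {j : Fin m}
    (hdj : 0 < d j) {v θ : Fin n → ℝ} (hθ : ∀ i ∉ s j, θ i = v i)
    (hN : ∑ i ∈ s j, θ i ^ 2 ≤ ∑ i ∈ s j, v i ^ 2) :
    fconj (fconj (gsk s d k)) θ ≤ fconj (fconj (gsk s d k)) v
      - ((d j * (∑ i ∈ s j, v i ^ 2 - ∑ i ∈ s j, θ i ^ 2) / 2 : ℝ) : EReal) := by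
  have hsq : ∀ x : Fin n → ℝ, 0 ≤ ∑ i ∈ s j, x i ^ 2 := fun x => sum_nonneg fun i _ => sq_nonneg _
  by_cases hv0 : ∑ i ∈ s j, v i ^ 2 = 0
  · have hzero : ∀ x : Fin n → ℝ, ∑ i ∈ s j, x i ^ 2 = 0 → ∀ i ∈ s j, x i = 0 :=
      fun x hx i hi => pow_eq_zero_iff two_ne_zero |>.1
        ((sum_eq_zero_iff_of_nonneg fun i _ => sq_nonneg _).1 hx i hi)
    have hθv : θ = v := funext fun i => by
      by_cases hi : i ∈ s j
      · rw [hzero θ ((hv0 ▸ hN).antisymm (hsq θ)) i hi, hzero v hv0 i hi]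
      · exact hθ i hi
    simp [hθv]
  rw [sub_eq_add_neg, ← EReal.coe_neg]
  refine fconj_le_fconj_add _ fun y => ?_
  set r := √(∑ i ∈ s j, v i ^ 2)
  set q := √(∑ i ∈ s j, θ i ^ 2)
  set ρ := √(∑ i ∈ s j, y i ^ 2)
  have hr : 0 < r := Real.sqrt_pos.2 ((hsq v).lt_of_ne' hv0)
  set μ := max (ρ / r) (d j)
  set y' := (s j).piecewise (fun i => μ * v i) y
  have hy'j : ∀ i ∈ s j, y' i = μ * v i := fun i hi => piecewise_eq_of_mem _ _ _ hi
  have hy'o : ∀ i ∉ s j, y' i = y i := fun i hi => piecewise_eq_of_notMem _ _ _ hi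
  have hy'N : ∑ i ∈ s j, y' i ^ 2 = μ ^ 2 * r ^ 2 := by
    rw [Real.sq_sqrt (hsq v), mul_sum]
    exact sum_congr rfl fun i hi => by rw [hy'j i hi]; ring
  have hρμ : ρ ≤ μ * r := (div_le_iff₀ hr).1 (le_max_left _ _)
  refine ⟨y', _, fconj_gsk_le_add s d k hdisj hdj hy'o ?_, ?_⟩
  · rw [hy'N, ← Real.sq_sqrt (hsq y), ← mul_pow]
    exact pow_le_pow_left₀ (Real.sqrt_nonneg _) hρμ 2
  have hpair : ∑ i, v i * y' i - ∑ i, θ i * y i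
      = μ * ∑ i ∈ s j, v i ^ 2 - ∑ i ∈ s j, θ i * y i := by
    rw [sum_sub_sum_eq_of_eq_off (s j) fun i hi => by rw [hθ i hi, hy'o i hi], mul_sum,
      ← sum_sub_distrib]
    exact sum_congr rfl fun i hi => by rw [hy'j i hi]; ring
  have hcs : ∑ i ∈ s j, θ i * y i ≤ q * ρ := Real.sum_mul_le_sqrt_mul_sqrt (s j) θ y
  have hbound :
      q * ρ + (μ ^ 2 * r ^ 2 - ρ ^ 2) / (2 * d j) ≤ μ * r ^ 2 - d j * (r ^ 2 - q ^ 2) / 2 :=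
    mul_add_sq_max_div_le hdj hr (Real.sqrt_le_sqrt hN)
  rw [Real.sq_sqrt (hsq v), Real.sq_sqrt (hsq θ), Real.sq_sqrt (hsq y)] at hbound
  rw [hy'N, Real.sq_sqrt (hsq v)]
  linarith

end GroupSparse

theorem prox_properties_general {n m : ℕ} (k : ℕ)
    (s : Fin m → Finset (Fin n))
    (hdisj : ∀ j j', j ≠ j' → Disjoint (s j) (s j'))
    (d : Fin m → ℝ) (hd : ∀ j, 0 < d j)
    (lam : ℝ) (hlam : 0 < lam) (t : Fin n → ℝ)
    (v : Fin n → ℝ)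
    (hv : ∀ θ : Fin n → ℝ,
      ((lam : ℝ) : EReal) * fconj (fconj (gsk s d k)) v
          + ((((1 : ℝ) / 2) * ∑ i, (v i - t i) ^ 2 : ℝ) : EReal)
        ≤ ((lam : ℝ) : EReal) * fconj (fconj (gsk s d k)) θ
          + ((((1 : ℝ) / 2) * ∑ i, (θ i - t i) ^ 2 : ℝ) : EReal)) :
    ∀ j, (∑ i ∈ s j, (v i) ^ 2 ≤ ∑ i ∈ s j, (t i) ^ 2)
      ∧ (groupProj (s j) t = 0 → groupProj (s j) v = 0)
      ∧ ∃ c : ℝ, 0 ≤ c ∧ c ≤ 1 / (lam * d j + 1) ∧ c ≤ 1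
          ∧ groupProj (s j) v = c • groupProj (s j) t := by
  have hG : ∀ θ, 0 ≤ fconj (fconj (gsk s d k)) θ :=
    fconj_nonneg _ (fconj_zero_nonpos _ (gsk_nonneg s d k fun j => (hd j).le))
  have hG0 : fconj (fconj (gsk s d k)) 0 ≠ ⊤ :=
    ne_top_of_le_ne_top EReal.zero_ne_top (fconj_zero_nonpos _ (fconj_nonneg _ (gsk_zero s d k).le))
  intro j
  have hL : 0 < lam * d j := mul_pos hlam (hd j)
  obtain ⟨c, hc0, hcL, hvc⟩ := exists_eq_mul_of_forall_le (s j) v t hL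
    fun c _ hcN => by
      set θ := (s j).piecewise (fun i => c * t i) v
      have hθj : ∀ i ∈ s j, θ i = c * t i := fun i hi => piecewise_eq_of_mem _ _ _ hi
      have hθo : ∀ i ∉ s j, θ i = v i := fun i hi => piecewise_eq_of_notMem _ _ _ hi
      have hθN : ∑ i ∈ s j, θ i ^ 2 = c ^ 2 * ∑ i ∈ s j, t i ^ 2 := by
        rw [mul_sum]
        exact sum_congr rfl fun i hi => by rw [hθj i hi]; ring
      have hle := fconj_fconj_gsk_le_sub s d k hdisj (hd j) hθo (by rw [hθN]; exact hcN)
      have hgain := mul_add_le_of_le_sub (G := fconj (fconj (gsk s d k)))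
        (q := fun θ => 1 / 2 * ∑ i, (θ i - t i) ^ 2) (v := v) (θ₀ := 0) (θ := θ) hlam hG hv
        hG0 hle
      have hsplit : ∑ i, (θ i - t i) ^ 2 - ∑ i, (v i - t i) ^ 2
          = ∑ i ∈ s j, (c * t i - t i) ^ 2 - ∑ i ∈ s j, (v i - t i) ^ 2 := by
        rw [sum_sub_sum_eq_of_eq_off (s j) fun i hi => by rw [hθo i hi], ← sum_sub_distrib]
        exact sum_congr rfl fun i hi => by rw [hθj i hi]
      rw [hθN] at hgain
      linarith
  have hc1 : c ≤ 1 := hcL.trans <| (div_le_one (by linarith)).2 (by linarith)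
  have hproj := groupProj_eq_smul hvc
  refine ⟨sum_le_sum fun i hi => ?_, fun ht => by rw [hproj, ht, smul_zero], c, hc0, hcL, hc1,
    hproj⟩
  rw [hvc i hi, mul_pow]
  exact mul_le_of_le_one_left (sq_nonneg _) (pow_le_one₀ hc0 hc1)

/-- the proximal point `v = prox_{λGS_k}(t)` (characterized as
the global minimizer of `θ ↦ λ·GS_k(θ) + ½‖θ-t‖²`) satisfies, group by group:
(i) `‖v_{s_j}‖₂ ≤ ‖t_{s_j}‖₂`; (ii) `v_{s_j} = 0` whenever `t_{s_j} = 0`;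
(iii) `v_{s_j}` is a nonnegative scalar multiple of `t_{s_j}` with scalar in
`[0, 1/(λd_j + 1)] ⊆ [0,1]`. -/
theorem prox_properties {n m : ℕ} (k : ℕ) (hk1 : 1 ≤ k) (hkm : k ≤ m)
    (s : Fin m → Finset (Fin n))
    (hdisj : ∀ j j', j ≠ j' → Disjoint (s j) (s j'))
    (hcover : ∀ i, ∃ j, i ∈ s j)
    (d : Fin m → ℝ) (hd : ∀ j, 0 < d j)
    (lam : ℝ) (hlam : 0 < lam) (t : Fin n → ℝ)
    (v : Fin n → ℝ)
    (hv : ∀ θ : Fin n → ℝ,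
      ((lam : ℝ) : EReal) * fconj (fconj (gsk s d k)) v
          + ((((1 : ℝ) / 2) * ∑ i, (v i - t i) ^ 2 : ℝ) : EReal)
        ≤ ((lam : ℝ) : EReal) * fconj (fconj (gsk s d k)) θ
          + ((((1 : ℝ) / 2) * ∑ i, (θ i - t i) ^ 2 : ℝ) : EReal)) :
    ∀ j, (∑ i ∈ s j, (v i) ^ 2 ≤ ∑ i ∈ s j, (t i) ^ 2)
      ∧ (groupProj (s j) t = 0 → groupProj (s j) v = 0)
      ∧ ∃ c : ℝ, 0 ≤ c ∧ c ≤ 1 / (lam * d j + 1) ∧ c ≤ 1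
          ∧ groupProj (s j) v = c • groupProj (s j) t :=
  prox_properties_general k s hdisj d hd lam hlam t v hv
end
end
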